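/- arXiv:1806.06751 — 5 statements merged into one kernel-verified Lean document; each statement's English description precedes it below -/
import Mathlib

section
/- For every natural number p and every integer n ≥ 1, Tr[A_{p+1}^n · A_{p+1}^T] = (n+2) · Tr[A_p^n · A_p^T]. -/
open Matrix

/-- Index type for the recursively defined block matrices `A p`,
of cardinality `2 ^ p`. -/
def IdxA : ℕ → Type
  | 0 => Fin 1
  | p + 1 => IdxA p ⊕ IdxA p

instance instFintypeIdxA : ∀ p, Fintype (IdxA p)
  | 0 => inferInstanceAs (Fintype (Fin 1))
  | p + 1 => letI := instFintypeIdxA p; inferInstanceAs (Fintype (IdxA p ⊕ IdxA p))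

instance instDecidableEqIdxA : ∀ p, DecidableEq (IdxA p)
  | 0 => inferInstanceAs (DecidableEq (Fin 1))
  | p + 1 => letI := instDecidableEqIdxA p; inferInstanceAs (DecidableEq (IdxA p ⊕ IdxA p))

/-- `A 0` is the 1×1 matrix with single entry 1, and
`A (p+1) = [[A p, (A p)ᵀ], [0, A p]]` as a 2×2 block matrix. -/
def A : (p : ℕ) → Matrix (IdxA p) (IdxA p) ℤ
  | 0 => Matrix.of fun _ _ => (1 : ℤ)
  | p + 1 => Matrix.fromBlocks (A p) (A p)ᵀ 0 (A p)

/-!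
Writing `B = [[M, N], [0, M]]`, the upper-right block of `B ^ n` is `∑_{k < n} M^k N M^(n-1-k)`.
For `N = Mᵀ` the diagonal blocks of `B ^ n * Bᵀ` are `M^n Mᵀ + (∑_{k < n} M^k Mᵀ M^(n-1-k)) M`
and `M^n Mᵀ`, and by cyclicity of the trace each of the `n` summands contributes `tr (M^n Mᵀ)`.
-/

namespace Matrix

theorem trace_fromBlocks {m n α : Type*} [Fintype m] [Fintype n] [AddCommMonoid α]
    (A : Matrix m m α) (B : Matrix m n α) (C : Matrix n m α) (D : Matrix n n α) :
    (fromBlocks A B C D).trace = A.trace + D.trace := by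
  simp [trace, Fintype.sum_sum_type]

variable {m : Type*} [Fintype m] [DecidableEq m]

theorem fromBlocks_zero₂₁_self_pow {α : Type*} [Semiring α] (M N : Matrix m m α) (n : ℕ) :
    fromBlocks M N 0 M ^ n
      = fromBlocks (M ^ n) (∑ k ∈ Finset.range n, M ^ k * N * M ^ (n - 1 - k)) 0 (M ^ n) := by
  induction n with
  | zero => simp [fromBlocks_one]
  | succ n ih =>
    have upper_right : M * ∑ k ∈ Finset.range n, M ^ k * N * M ^ (n - 1 - k) + N * M ^ n
        = ∑ k ∈ Finset.range (n + 1), M ^ k * N * M ^ (n + 1 - 1 - k) := by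
      rw [Finset.sum_range_succ', Finset.mul_sum]
      refine congrArg₂ (· + ·) (Finset.sum_congr rfl fun k _ => ?_) (by simp)
      rw [pow_succ', Nat.add_sub_cancel, Nat.sub_sub, add_comm 1 k, Matrix.mul_assoc,
        Matrix.mul_assoc, Matrix.mul_assoc]
    rw [pow_succ', ih, fromBlocks_multiply, ← upper_right]
    simp [pow_succ']

variable {α : Type*} [CommSemiring α]

theorem trace_pow_mul_mul_pow (M N : Matrix m m α) (i j : ℕ) :
    trace (M ^ i * N * M ^ j) = trace (M ^ (j + i) * N) := by
  rw [trace_mul_cycle, pow_add]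

theorem trace_sum_range_pow_mul_mul_pow_mul (M N : Matrix m m α) (n : ℕ) :
    trace ((∑ k ∈ Finset.range n, M ^ k * N * M ^ (n - 1 - k)) * M)
      = n * trace (M ^ n * N) := by
  rw [Finset.sum_mul, trace_sum]
  have summand : ∀ k ∈ Finset.range n,
      trace (M ^ k * N * M ^ (n - 1 - k) * M) = trace (M ^ n * N) := by
    intro k hk
    rw [Matrix.mul_assoc _ _ M, ← pow_succ, trace_pow_mul_mul_pow]
    congr 3
    have := Finset.mem_range.mp hk
    omega
  rw [Finset.sum_congr rfl summand, Finset.sum_const, Finset.card_range, nsmul_eq_mul]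

theorem trace_pow_fromBlocks_transpose_mul_transpose (M : Matrix m m α) (n : ℕ) :
    trace (fromBlocks M Mᵀ 0 M ^ n * (fromBlocks M Mᵀ 0 M)ᵀ)
      = (n + 2) * trace (M ^ n * Mᵀ) := by
  rw [fromBlocks_zero₂₁_self_pow, fromBlocks_transpose, transpose_transpose, transpose_zero,
    fromBlocks_multiply, trace_fromBlocks]
  simp only [Matrix.mul_zero, zero_add, trace_add, trace_sum_range_pow_mul_mul_pow_mul]
  ring

end Matrix

theorem trace_pow_A_succ_mul_transpose_general (p n : ℕ) :
    Matrix.trace ((A (p + 1)) ^ n * (A (p + 1))ᵀ)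
      = ((n : ℤ) + 2) * Matrix.trace ((A p) ^ n * (A p)ᵀ) :=
  trace_pow_fromBlocks_transpose_mul_transpose (A p) n

theorem trace_pow_A_succ_mul_transpose (p n : ℕ) (hn : 1 ≤ n) :
    Matrix.trace ((A (p + 1)) ^ n * (A (p + 1))ᵀ)
      = ((n : ℤ) + 2) * Matrix.trace ((A p) ^ n * (A p)ᵀ) :=
  trace_pow_A_succ_mul_transpose_general p n
end

section
/- The sequence (Tr[B_p^2])^{1/(2p)} = (2·(2^p + 3^p))^{1/(2p)} converges to √3 as p → ∞ (the limit taken over real numbers). -/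
open Matrix

/-- The symmetrized transfer matrix `B p = A p + (A p)ᵀ`. -/
def B (p : ℕ) : Matrix (IdxA p) (IdxA p) ℤ := A p + (A p)ᵀ


/-!
Expanding the square gives `Tr[B_p²] = 2 Tr[A_p²] + 2 Tr[A_p A_pᵀ]`, and multiplying out the
block recursion shows that these two traces are multiplied by `2` and by `3` at each step. Hence
`Tr[B_p²] = 3^p · 2(1 + (2/3)^p)`, and the `(2p)`-th root of the second factor tends to `1`.
-/

open Filter Topology

namespace Matrix

variable {n m R : Type*} [Fintype n] [Fintype m]

theorem trace_fromBlocks_s7 [AddCommMonoid R] (M : Matrix n n R) (P : Matrix n m R)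
    (Q : Matrix m n R) (N : Matrix m m R) :
    (fromBlocks M P Q N).trace = M.trace + N.trace :=
  Fintype.sum_sum_type _

theorem trace_add_transpose_sq [DecidableEq n] [CommRing R] (M : Matrix n n R) :
    ((M + Mᵀ) ^ 2).trace = 2 * (M * M).trace + 2 * (M * Mᵀ).trace := by
  have h_transpose_sq : (Mᵀ * Mᵀ).trace = (M * M).trace := by
    rw [← transpose_mul, trace_transpose]
  have h_transpose_mul : (Mᵀ * M).trace = (M * Mᵀ).trace := trace_mul_comm _ _
  rw [sq, add_mul, mul_add, mul_add, trace_add, trace_add, trace_add, h_transpose_sq,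
    h_transpose_mul]
  ring

end Matrix

theorem trace_A_mul_self : ∀ p, (A p * A p).trace = 2 ^ p
  | 0 => rfl
  | p + 1 => by
    change (fromBlocks (A p) (A p)ᵀ 0 (A p) * fromBlocks (A p) (A p)ᵀ 0 (A p)).trace = _
    rw [fromBlocks_multiply, trace_fromBlocks_s7]
    simp only [Matrix.mul_zero, Matrix.zero_mul, add_zero, zero_add, trace_A_mul_self p, pow_succ]
    ring

theorem trace_A_mul_transpose : ∀ p, (A p * (A p)ᵀ).trace = 3 ^ p
  | 0 => rfl
  | p + 1 => by
    change (fromBlocks (A p) (A p)ᵀ 0 (A p) * (fromBlocks (A p) (A p)ᵀ 0 (A p))ᵀ).trace = _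
    rw [fromBlocks_transpose, fromBlocks_multiply, trace_fromBlocks_s7, trace_add]
    simp only [transpose_zero, transpose_transpose, Matrix.mul_zero, zero_add,
      trace_mul_comm (A p)ᵀ (A p), trace_A_mul_transpose p, pow_succ]
    ring

theorem trace_B_sq (p : ℕ) : ((B p) ^ 2).trace = 2 * (2 ^ p + 3 ^ p) := by
  rw [B, trace_add_transpose_sq, trace_A_mul_self, trace_A_mul_transpose]
  ring

theorem tendsto_pow_mul_rpow_one_div_mul {b k L : ℝ} {v : ℕ → ℝ} (hb : 0 ≤ b) (hL : 0 < L)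
    (hv : Tendsto v atTop (𝓝 L)) :
    Tendsto (fun p : ℕ => (b ^ p * v p) ^ (1 / (k * p))) atTop (𝓝 (b ^ (1 / k))) := by
  have h_exponent : Tendsto (fun p : ℕ => 1 / (k * p)) atTop (𝓝 0) := by
    simpa only [one_div, mul_inv, mul_zero] using
      (tendsto_inv_atTop_nhds_zero_nat (𝕜 := ℝ)).const_mul k⁻¹
  have h_root : Tendsto (fun p : ℕ => v p ^ (1 / (k * p))) atTop (𝓝 1) := by
    simpa only [Real.rpow_zero] using hv.rpow h_exponent (Or.inl hL.ne')
  have h_lim := h_root.const_mul (b ^ (1 / k))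
  rw [mul_one] at h_lim
  refine h_lim.congr' ?_
  filter_upwards [hv.eventually (lt_mem_nhds hL), eventually_ne_atTop 0] with p hvp hp
  have h_pow_root : (b ^ p) ^ (1 / (k * p)) = b ^ (1 / k) := by
    rw [← Real.rpow_natCast, ← Real.rpow_mul hb]
    congr 1
    field_simp
  rw [Real.mul_rpow (pow_nonneg hb p) hvp.le, h_pow_root]

theorem trace_B_sq_root_tendsto :
    Filter.Tendsto
      (fun p : ℕ => ((Matrix.trace ((B p) ^ 2) : ℤ) : ℝ) ^ (1 / (2 * (p : ℝ))))
      Filter.atTop (nhds (Real.sqrt 3)) := by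
  have h_factor (p : ℕ) :
      ((Matrix.trace ((B p) ^ 2) : ℤ) : ℝ) = 3 ^ p * (2 * ((2 / 3) ^ p + 1)) := by
    rw [trace_B_sq, div_pow]
    push_cast
    field_simp
  have h_cofactor : Tendsto (fun p : ℕ => 2 * ((2 / 3 : ℝ) ^ p + 1)) atTop (𝓝 2) := by
    simpa using ((tendsto_pow_atTop_nhds_zero_of_lt_one (by norm_num) (by norm_num)).add_const
      1).const_mul (2 : ℝ)
  simp only [h_factor, Real.sqrt_eq_rpow]
  exact tendsto_pow_mul_rpow_one_div_mul (by norm_num) two_pos h_cofactor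
end

section
/- The sequence (Tr[B_p^3])^{1/(3p)} = (2^{p+1} + 6·4^p)^{1/(3p)} converges to 4^{1/3} as p → ∞ (the limit taken over real numbers). -/
open Matrix

/-! Writing `M = A p`, block multiplication gives `tr (A (p+1))³ = 2 tr M³` and
`tr (A (p+1)² A (p+1)ᵀ) = 4 tr (M² Mᵀ)`. Expanding `(M + Mᵀ)³`, cyclicity of the trace and
`tr Xᵀ = tr X` reduce two of the eight words to `tr M³` and the other six to `tr (M² Mᵀ)`, so
`tr (B p)³ = 2 ^ (p+1) + 6 · 4 ^ p`. This lies between `6 · 4 ^ p` and `8 · 4 ^ p`, and the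
constants disappear under the `3p`-th root. -/

namespace Matrix

variable {n m R : Type*} [Fintype n] [Fintype m]

theorem trace_fromBlocks_s9 [AddCommMonoid R] (W : Matrix n n R) (X : Matrix n m R)
    (Y : Matrix m n R) (Z : Matrix m m R) :
    trace (fromBlocks W X Y Z) = trace W + trace Z := by
  simp [trace, Fintype.sum_sum_type]

variable [CommSemiring R]

theorem trace_mul_mul_fromBlocks_transpose (M : Matrix n n R) :
    trace (fromBlocks M Mᵀ 0 M * fromBlocks M Mᵀ 0 M * fromBlocks M Mᵀ 0 M)
      = 2 * trace (M * M * M) := by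
  simp only [fromBlocks_multiply, trace_fromBlocks_s9, mul_zero, zero_mul, add_zero, zero_add]
  ring

theorem trace_mul_mul_transpose_fromBlocks_transpose (M : Matrix n n R) :
    trace (fromBlocks M Mᵀ 0 M * fromBlocks M Mᵀ 0 M * (fromBlocks M Mᵀ 0 M)ᵀ)
      = 4 * trace (M * M * Mᵀ) := by
  simp only [fromBlocks_transpose, fromBlocks_multiply, trace_fromBlocks_s9, transpose_zero,
    transpose_transpose, mul_zero, zero_mul, add_zero, zero_add, Matrix.add_mul, trace_add]
  rw [trace_mul_cycle Mᵀ M M, trace_mul_cycle M Mᵀ M]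
  ring

theorem trace_add_transpose_pow_three [DecidableEq n] (M : Matrix n n R) :
    trace ((M + Mᵀ) ^ 3) = 2 * trace (M * M * M) + 6 * trace (M * M * Mᵀ) := by
  have hcycle : trace (M * Mᵀ * M) = trace (M * M * Mᵀ) := trace_mul_cycle _ _ _
  have htranspose (X Y Z : Matrix n n R) : trace (Xᵀ * Yᵀ * Zᵀ) = trace (Z * Y * X) := by
    rw [← trace_transpose]; simp [transpose_mul, Matrix.mul_assoc]
  have h1 := htranspose M M M
  have h2 := htranspose Mᵀ M M
  have h3 := htranspose M Mᵀ M
  have h4 := htranspose M M Mᵀ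
  simp only [transpose_transpose] at h1 h2 h3 h4
  simp only [pow_three, Matrix.add_mul, Matrix.mul_add, trace_add, ← Matrix.mul_assoc]
  rw [h1, h2, h3, h4, trace_mul_cycle Mᵀ M M, hcycle]
  ring

end Matrix

open Matrix

theorem trace_A_mul_A_mul_A (p : ℕ) : trace (A p * A p * A p) = 2 ^ p := by
  induction p with
  | zero => decide
  | succ p ih =>
    calc trace (A (p + 1) * A (p + 1) * A (p + 1)) = 2 * trace (A p * A p * A p) :=
          trace_mul_mul_fromBlocks_transpose (A p)
      _ = 2 ^ (p + 1) := by rw [ih, pow_succ']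

theorem trace_A_mul_A_mul_transpose (p : ℕ) : trace (A p * A p * (A p)ᵀ) = 4 ^ p := by
  induction p with
  | zero => decide
  | succ p ih =>
    calc trace (A (p + 1) * A (p + 1) * (A (p + 1))ᵀ) = 4 * trace (A p * A p * (A p)ᵀ) :=
          trace_mul_mul_transpose_fromBlocks_transpose (A p)
      _ = 4 ^ (p + 1) := by rw [ih, pow_succ']

theorem trace_B_pow_three (p : ℕ) : trace (B p ^ 3) = 2 * 2 ^ p + 6 * 4 ^ p := by
  rw [B, trace_add_transpose_pow_three, trace_A_mul_A_mul_A, trace_A_mul_A_mul_transpose]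

open Filter Topology

theorem rpow_natCast_rpow_one_div_mul {a : ℝ} (ha : 0 ≤ a) (k : ℝ) {p : ℕ} (hp : p ≠ 0) :
    ((a ^ p) ^ (1 / (k * p)) : ℝ) = a ^ (1 / k) := by
  rw [← Real.rpow_natCast, ← Real.rpow_mul ha]
  congr 1
  field_simp

theorem tendsto_rpow_one_div_mul_natCast {c : ℝ} (hc : 0 < c) (k : ℝ) :
    Tendsto (fun p : ℕ => c ^ (1 / (k * p))) atTop (𝓝 1) := by
  have h : Tendsto (fun p : ℕ => 1 / (k * p)) atTop (𝓝 0) := by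
    simpa only [div_mul_eq_div_div] using tendsto_const_div_atTop_nhds_zero_nat (1 / k)
  simpa [Function.comp_def] using (Real.continuousAt_const_rpow hc.ne').tendsto.comp h

theorem tendsto_rpow_one_div_mul_natCast_of_le_of_le {x : ℕ → ℝ} {a c d k : ℝ} (ha : 0 ≤ a)
    (hc : 0 < c) (hd : 0 < d) (hk : 0 ≤ k) (hlow : ∀ᶠ p in atTop, c * a ^ p ≤ x p)
    (hup : ∀ᶠ p in atTop, x p ≤ d * a ^ p) :
    Tendsto (fun p : ℕ => x p ^ (1 / (k * p))) atTop (𝓝 (a ^ (1 / k))) := by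
  have hscaled {b : ℝ} (hb : 0 < b) {p : ℕ} (hp : p ≠ 0) :
      (b * a ^ p) ^ (1 / (k * p)) = b ^ (1 / (k * p)) * a ^ (1 / k) := by
    rw [Real.mul_rpow hb.le (pow_nonneg ha p), rpow_natCast_rpow_one_div_mul ha k hp]
  have hlim {b : ℝ} (hb : 0 < b) :
      Tendsto (fun p : ℕ => b ^ (1 / (k * p)) * a ^ (1 / k)) atTop (𝓝 (a ^ (1 / k))) := by
    simpa using (tendsto_rpow_one_div_mul_natCast hb k).mul_const (a ^ (1 / k))
  refine tendsto_of_tendsto_of_tendsto_of_le_of_le' (hlim hc) (hlim hd) ?_ ?_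
  · filter_upwards [hlow, eventually_ne_atTop 0] with p hp hp0
    rw [← hscaled hc hp0]
    exact Real.rpow_le_rpow (by positivity) hp (by positivity)
  · filter_upwards [hlow, hup, eventually_ne_atTop 0] with p hpl hpu hp0
    rw [← hscaled hd hp0]
    exact Real.rpow_le_rpow (le_trans (by positivity) hpl) hpu (by positivity)

theorem trace_B_cube_root_tendsto :
    Filter.Tendsto
      (fun p : ℕ => ((Matrix.trace ((B p) ^ 3) : ℤ) : ℝ) ^ (1 / (3 * (p : ℝ))))
      Filter.atTop (nhds ((4 : ℝ) ^ ((1 : ℝ) / 3))) := by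
  have htrace (p : ℕ) : ((trace (B p ^ 3) : ℤ) : ℝ) = 2 * 2 ^ p + 6 * 4 ^ p := by
    rw [trace_B_pow_three]
    push_cast
    ring
  refine tendsto_rpow_one_div_mul_natCast_of_le_of_le (c := 6) (d := 8) (by norm_num)
    (by norm_num) (by norm_num) (by norm_num) (.of_forall fun p => ?_) (.of_forall fun p => ?_)
  · rw [htrace]
    linarith [pow_pos (two_pos : (0 : ℝ) < 2) p]
  · rw [htrace]
    linarith [pow_le_pow_left₀ (by norm_num : (0 : ℝ) ≤ 2) (by norm_num : (2 : ℝ) ≤ 4) p]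
end

section
/- Define x_p = Tr[A_p^2 · (A_p^T)^2] and y_p = Tr[A_p · A_p^T · A_p · A_p^T]. Then x_0 = y_0 = 1, and for every natural number p, x_{p+1} = 4·x_p + 2·y_p and y_{p+1} = 4·x_p + 3·y_p. -/
open Matrix

/-- `x p = Tr[(A p)² ((A p)ᵀ)²]`. -/
def xSeq (p : ℕ) : ℤ := Matrix.trace ((A p) ^ 2 * ((A p)ᵀ) ^ 2)

/-- `y p = Tr[A p (A p)ᵀ A p (A p)ᵀ]`. -/
def ySeq (p : ℕ) : ℤ := Matrix.trace (A p * (A p)ᵀ * A p * (A p)ᵀ)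

/-!
Writing `B = Aᵀ`, we have `A (p+1) = [[A, B], [0, A]]` and `A (p+1)ᵀ = [[B, 0], [A, B]]`.
Multiplying out the blocks, the trace of each length-four word in `A (p+1)` and its transpose is a
sum of traces of length-four words in `A` and `B`. By cyclicity of the trace every such word is
equivalent to either `A A B B` (trace `x p`) or `A B A B` (trace `y p`), and counting them gives
the coefficients.
-/

namespace Matrix

variable {n o R : Type*} [Fintype n] [Fintype o]

theorem trace_fromBlocks_s10 [AddCommMonoid R] (a : Matrix n n R) (b : Matrix n o R)
    (c : Matrix o n R) (d : Matrix o o R) :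
    trace (fromBlocks a b c d) = trace a + trace d := by
  simp [trace, Fintype.sum_sum_type]

theorem trace_mul_mul_mul_cycle [CommSemiring R] (a b c d : Matrix n n R) :
    trace (a * b * c * d) = trace (d * a * b * c) := by
  rw [trace_mul_comm, ← mul_assoc, ← mul_assoc]

end Matrix

section fromBlocks

variable {n R : Type*} [Fintype n] [DecidableEq n] [CommRing R]

theorem trace_sq_mul_transpose_sq_fromBlocks (M : Matrix n n R) :
    trace ((fromBlocks M Mᵀ 0 M) ^ 2 * ((fromBlocks M Mᵀ 0 M)ᵀ) ^ 2)
      = 4 * trace (M ^ 2 * Mᵀ ^ 2) + 2 * trace (M * Mᵀ * M * Mᵀ) := by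
  simp only [pow_two, fromBlocks_transpose, transpose_zero, transpose_transpose,
    fromBlocks_multiply, Matrix.mul_add, Matrix.add_mul, Matrix.zero_mul, Matrix.mul_zero,
    add_zero, zero_add, trace_fromBlocks_s10, trace_add, ← mul_assoc,
    trace_mul_mul_mul_cycle Mᵀ M M Mᵀ, trace_mul_mul_mul_cycle Mᵀ Mᵀ M M,
    trace_mul_mul_mul_cycle M Mᵀ Mᵀ M, trace_mul_mul_mul_cycle Mᵀ M Mᵀ M]
  ring

theorem trace_mul_transpose_mul_mul_transpose_fromBlocks (M : Matrix n n R) :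
    trace (fromBlocks M Mᵀ 0 M * (fromBlocks M Mᵀ 0 M)ᵀ * fromBlocks M Mᵀ 0 M *
        (fromBlocks M Mᵀ 0 M)ᵀ)
      = 4 * trace (M ^ 2 * Mᵀ ^ 2) + 3 * trace (M * Mᵀ * M * Mᵀ) := by
  simp only [pow_two, fromBlocks_transpose, transpose_zero, transpose_transpose,
    fromBlocks_multiply, Matrix.add_mul, Matrix.zero_mul, Matrix.mul_zero,
    add_zero, zero_add, trace_fromBlocks_s10, trace_add, ← mul_assoc,
    trace_mul_mul_mul_cycle Mᵀ M M Mᵀ, trace_mul_mul_mul_cycle Mᵀ Mᵀ M M,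
    trace_mul_mul_mul_cycle M Mᵀ Mᵀ M, trace_mul_mul_mul_cycle Mᵀ M Mᵀ M]
  ring

end fromBlocks

theorem xSeq_ySeq_recursion :
    xSeq 0 = 1 ∧ ySeq 0 = 1 ∧
    ∀ p : ℕ,
      xSeq (p + 1) = 4 * xSeq p + 2 * ySeq p ∧
      ySeq (p + 1) = 4 * xSeq p + 3 * ySeq p :=
  ⟨by decide, by decide, fun p =>
    ⟨trace_sq_mul_transpose_sq_fromBlocks (A p),
      trace_mul_transpose_mul_mul_transpose_fromBlocks (A p)⟩⟩
end

section
/- Let k ≥ 2 be an integer, let V_k be the set of quadruples ξ = (ξ₁,ξ₂,ξ₃,ξ₄) of nonzero elements of ZMod k with ξ₁+ξ₂+ξ₃+ξ₄ = 0, and let a be the integer matrix indexed by V_k with a(ξ,ξ') = k-2 if ξ₁ + ξ'₃ = 0 and a(ξ,ξ') = -1 otherwise. Then for every integer i ≥ 1, Tr[a^i] = (k-2)·(k-1)^i. -/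
/-!
The matrix `a` only depends on `(ξ₁, ξ₃)`: on the `k - 1` nonzero residues it is
`b = (k - 1) D - J`, where `D` is the permutation matrix of `u ↦ -u` and `J` the all-ones
matrix, i.e. `a = P b Qᵀ` for the graph matrices `P`, `Q` of `ξ ↦ ξ₁` and `ξ ↦ ξ₃`.
Given `ξ₃ = u` and `ξ₁ = v`, the configuration is determined by `ξ₂ ∉ {0, -(u + v)}`, so
`N = QᵀP = (k - 2) J + D`. From `D² = 1`, `DJ = JD = J` and `J² = (k - 1) J` one gets
`b N = (k - 1) I - J` and `b N b = (k - 1) b`. Hence `a² = (k - 1) a`, and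
`tr a = tr (b N) = (k - 1)(k - 2)`, so `tr aⁱ = (k - 1)ⁱ⁻¹ tr a`.
-/

/-- The set of allowed vertex configurations: quadruples of nonzero edge states
in `ZMod k` summing to zero. -/
abbrev VertexConfig (k : ℕ) : Type :=
  {ξ : ZMod k × ZMod k × ZMod k × ZMod k //
    ξ.1 ≠ 0 ∧ ξ.2.1 ≠ 0 ∧ ξ.2.2.1 ≠ 0 ∧ ξ.2.2.2 ≠ 0 ∧
    ξ.1 + ξ.2.1 + ξ.2.2.1 + ξ.2.2.2 = 0}

/-- The normalized compatibility matrix: entry `k - 2` when configurations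
`ξ, ξ'` are compatible (i.e. `ξ₁ + ξ'₃ = 0`), and `-1` otherwise. -/
def compatMat (k : ℕ) : Matrix (VertexConfig k) (VertexConfig k) ℤ :=
  Matrix.of fun ξ ξ' => if ξ.val.1 + ξ'.val.2.2.1 = 0 then (k : ℤ) - 2 else -1

open Finset Matrix

section FiberCount

variable {V E R : Type*} [DecidableEq E]

def fiberCount [Fintype V] [Semiring R] (q p : V → E) : Matrix E E R :=
  of fun u v => #{x | q x = u ∧ p x = v}

section Semiring

variable [Semiring R]

theorem submatrix_eq_one_submatrix_mul_mul [Fintype E] (b : Matrix E E R) (p q : V → E) :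
    b.submatrix p q =
      (1 : Matrix E E R).submatrix p id * b * ((1 : Matrix E E R).submatrix q id)ᵀ := by
  ext x y
  simp [mul_apply, one_apply]

theorem transpose_one_submatrix_mul_one_submatrix [Fintype V] (p q : V → E) :
    ((1 : Matrix E E R).submatrix q id)ᵀ * (1 : Matrix E E R).submatrix p id =
      fiberCount q p := by
  ext u v
  simp [mul_apply, one_apply, fiberCount, ← ite_and, sum_boole, and_comm, eq_comm]

theorem submatrix_mul_submatrix [Fintype V] [Fintype E] (b c : Matrix E E R) (p q : V → E) :
    b.submatrix p q * c.submatrix p q = (b * fiberCount q p * c).submatrix p q := by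
  simp only [submatrix_eq_one_submatrix_mul_mul _ p q,
    ← transpose_one_submatrix_mul_one_submatrix, Matrix.mul_assoc]

end Semiring

theorem trace_submatrix [Fintype V] [Fintype E] [CommSemiring R] (b : Matrix E E R)
    (p q : V → E) :
    (b.submatrix p q).trace = (fiberCount q p * b).trace := by
  rw [submatrix_eq_one_submatrix_mul_mul _ p q, trace_mul_comm, ←
    transpose_one_submatrix_mul_one_submatrix, Matrix.mul_assoc]

end FiberCount

theorem pow_succ_eq_smul_of_mul_self_eq_smul {M R : Type*} [Monoid M] [Monoid R] [MulAction R M]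
    [IsScalarTower R M M] {a : M} {c : R} (h : a * a = c • a) (n : ℕ) :
    a ^ (n + 1) = c ^ n • a := by
  induction n with
  | zero => simp
  | succ n ih => rw [pow_succ, ih, smul_mul_assoc, h, smul_smul, ← pow_succ]

theorem of_one_mul_of_one {E R : Type*} [Fintype E] [Semiring R] :
    (of 1 : Matrix E E R) * of 1 = (Fintype.card E : R) • of 1 := by
  ext; simp [mul_apply]

section PermMatrix

variable {E R : Type*} [Fintype E] [DecidableEq E]

section NonAssocSemiring

variable [NonAssocSemiring R] (σ : Equiv.Perm E)

theorem permMatrix_mul_of_one : σ.permMatrix R * of 1 = of 1 := by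
  rw [PEquiv.toMatrix_toPEquiv_mul]; rfl

theorem of_one_mul_permMatrix : of 1 * σ.permMatrix R = of 1 := by
  rw [PEquiv.mul_toMatrix_toPEquiv]; rfl

variable {σ}

theorem permMatrix_mul_self_of_involutive (hσ : Function.Involutive σ) :
    σ.permMatrix R * σ.permMatrix R = 1 := by
  rw [← permMatrix_mul, show σ * σ = 1 from Equiv.ext hσ, permMatrix_one]

end NonAssocSemiring

variable [CommRing R] {σ : Equiv.Perm E} {n : R}

theorem mul_eq_smul_one_sub_of_one (hσ : Function.Involutive σ) (hn : (Fintype.card E : R) = n) :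
    (n • σ.permMatrix R - of 1) * ((n - 1) • of 1 + σ.permMatrix R) = n • 1 - of 1 := by
  simp only [sub_mul, mul_add, smul_mul_assoc, mul_smul_comm, permMatrix_mul_of_one,
    of_one_mul_permMatrix, of_one_mul_of_one, permMatrix_mul_self_of_involutive hσ, hn]
  module

theorem mul_mul_eq_smul_of_involutive (hσ : Function.Involutive σ)
    (hn : (Fintype.card E : R) = n) :
    (n • σ.permMatrix R - of 1) * ((n - 1) • of 1 + σ.permMatrix R) *
      (n • σ.permMatrix R - of 1) = n • (n • σ.permMatrix R - of 1) := by
  rw [mul_eq_smul_one_sub_of_one hσ hn]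
  simp only [sub_mul, mul_sub, smul_mul_assoc, mul_smul_comm, Matrix.one_mul, of_one_mul_permMatrix,
    of_one_mul_of_one, hn]
  module

theorem trace_mul_of_involutive (hσ : Function.Involutive σ) (hn : (Fintype.card E : R) = n) :
    (((n - 1) • of 1 + σ.permMatrix R) * (n • σ.permMatrix R - of 1)).trace =
      n * (n - 1) := by
  have trace_of_one : (of 1 : Matrix E E R).trace = Fintype.card E := by simp [trace]
  rw [trace_mul_comm, mul_eq_smul_one_sub_of_one hσ hn, trace_sub, trace_smul, trace_one,
    trace_of_one, hn, smul_eq_mul]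
  ring

end PermMatrix

theorem card_filter_ne_and_ne {α : Type*} [Fintype α] [DecidableEq α] (a c : α) :
    (#{b | b ≠ a ∧ b ≠ c} : ℤ) = Fintype.card α - 2 + if c = a then 1 else 0 := by
  have hfilter : ({b | b ≠ a ∧ b ≠ c} : Finset α) = (univ.erase a).erase c := by
    ext; simp [and_comm]
  have hpos : 0 < Fintype.card α := Fintype.card_pos_iff.2 ⟨a⟩
  rw [hfilter, card_erase_eq_ite, card_erase_of_mem (mem_univ a), card_univ]
  by_cases h : c = a
  · simp only [h, mem_erase, ne_eq, not_true_eq_false, false_and, if_false, if_true]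
    omega
  · have : 1 < Fintype.card α := Fintype.one_lt_card_iff.2 ⟨a, c, Ne.symm h⟩
    simp only [h, mem_erase, ne_eq, not_false_eq_true, mem_univ, and_self, if_true, if_false]
    omega

section VertexConfigs

variable {k : ℕ}

def negNonzero : Equiv.Perm {u : ZMod k // u ≠ 0} :=
  (Equiv.neg (ZMod k)).subtypeEquiv fun _ => neg_ne_zero.symm

@[simp]
theorem coe_negNonzero (u : {u : ZMod k // u ≠ 0}) : (negNonzero u : ZMod k) = -u := rfl

theorem negNonzero_involutive : Function.Involutive (negNonzero (k := k)) :=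
  fun u => Subtype.ext (neg_neg u.val)

namespace VertexConfig

def first (ξ : VertexConfig k) : {u : ZMod k // u ≠ 0} := ⟨ξ.val.1, ξ.prop.1⟩

def third (ξ : VertexConfig k) : {u : ZMod k // u ≠ 0} := ⟨ξ.val.2.2.1, ξ.prop.2.2.1⟩

end VertexConfig

open VertexConfig

theorem compatMat_eq_submatrix :
    compatMat k = (((k : ℤ) - 1) • negNonzero.permMatrix ℤ - of 1).submatrix first third := by
  ext ξ ξ'
  by_cases h : ξ.val.1 + ξ'.val.2.2.1 = 0 <;>
    simp [compatMat, PEquiv.toMatrix_apply, first, third, Subtype.ext_iff, neg_eq_iff_add_eq_zero,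
      h, sub_sub]

variable [NeZero k]

theorem card_nonzero : (Fintype.card {u : ZMod k // u ≠ 0} : ℤ) = k - 1 := by
  rw [Fintype.card_subtype_compl, Fintype.card_subtype_eq, ZMod.card]
  have := NeZero.one_le (n := k)
  omega

theorem card_filter_third_first (u v : {u : ZMod k // u ≠ 0}) :
    #{ξ : VertexConfig k | third ξ = u ∧ first ξ = v} =
      #{b : ZMod k | b ≠ 0 ∧ b ≠ -(v + u)} := by
  refine card_bij' (fun ξ _ => ξ.val.2.1)
    (fun b hb => ⟨(v, b, u, -(v + b + u)), v.2, (mem_filter.1 hb).2.1, u.2, ?_, by ring⟩)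
    ?_ ?_ ?_ ?_
  · exact neg_ne_zero.2 fun h => (mem_filter.1 hb).2.2 (by linear_combination h)
  · rintro ⟨⟨a, b, c, d⟩, _, hb, _, hd, hsum⟩ hξ
    obtain ⟨rfl, rfl⟩ : c = u ∧ a = v := by simpa [first, third, Subtype.ext_iff] using hξ
    exact mem_filter.2 ⟨mem_univ _, hb, fun h => hd (by linear_combination hsum - h)⟩
  · exact fun _ _ => by simp [first, third, Subtype.ext_iff]
  · rintro ⟨⟨a, b, c, d⟩, _, _, _, _, hsum⟩ hξ
    obtain ⟨rfl, rfl⟩ : c = u ∧ a = v := by simpa [first, third, Subtype.ext_iff] using hξ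
    exact Subtype.ext (Prod.ext rfl (Prod.ext rfl (Prod.ext rfl (by linear_combination -hsum))))
  · exact fun _ _ => rfl

theorem fiberCount_third_first :
    (fiberCount (third (k := k)) first : Matrix _ _ ℤ) =
      ((k : ℤ) - 2) • of 1 + negNonzero.permMatrix ℤ := by
  ext u v
  rw [fiberCount, of_apply, card_filter_third_first, card_filter_ne_and_ne, ZMod.card]
  simp only [neg_eq_zero]
  simp [PEquiv.toMatrix_apply, Subtype.ext_iff, neg_eq_iff_add_eq_zero, add_comm (v : ZMod k)]

theorem compatMat_mul_self : compatMat k * compatMat k = ((k : ℤ) - 1) • compatMat k := by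
  rw [compatMat_eq_submatrix, submatrix_mul_submatrix, fiberCount_third_first,
    show (k : ℤ) - 2 = (k - 1) - 1 by ring,
    mul_mul_eq_smul_of_involutive negNonzero_involutive card_nonzero]
  rfl

theorem trace_compatMat : (compatMat k).trace = ((k : ℤ) - 2) * ((k : ℤ) - 1) := by
  rw [compatMat_eq_submatrix, trace_submatrix, fiberCount_third_first,
    show (k : ℤ) - 2 = (k - 1) - 1 by ring,
    trace_mul_of_involutive negNonzero_involutive card_nonzero]
  ring

end VertexConfigs

theorem trace_compatMat_pow (k : ℕ) (hk : 2 ≤ k) (i : ℕ) (hi : 1 ≤ i) :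
    letI : NeZero k := ⟨by omega⟩
    Matrix.trace ((compatMat k) ^ i) = ((k : ℤ) - 2) * ((k : ℤ) - 1) ^ i := by
  have : NeZero k := ⟨by omega⟩
  obtain ⟨n, rfl⟩ := Nat.exists_eq_add_of_le' hi
  rw [pow_succ_eq_smul_of_mul_self_eq_smul compatMat_mul_self, trace_smul, trace_compatMat,
    smul_eq_mul]
  ring
end
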